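/- arXiv:1606.07157 — 3 statements merged into one kernel-verified Lean document; each statement's English description precedes it below -/
import Mathlib

section
/- For every graph G and every edge uv of G, the maximum matching width of G/uv (the graph obtained by contracting uv) is at most the maximum matching width of G. -/
open SimpleGraph

/-- Size of a maximum matching in the bipartite graph of edges of `G` crossing `(A, Aᶜ)`. -/
noncomputable def mmVal {V : Type*} (G : SimpleGraph V) (A : Set V) : ℕ :=
  sSup {n | ∃ M : Finset (V × V),
    (∀ p ∈ M, p.1 ∈ A ∧ p.2 ∉ A ∧ G.Adj p.1 p.2) ∧
    (∀ p ∈ M, ∀ q ∈ M, p ≠ q → p.1 ≠ q.1 ∧ p.2 ≠ q.2) ∧ M.card = n}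

/-- A branch-decomposition over the vertex set of `G`: a finite subcubic tree together with a
bijection between its leaves and the vertices of `G`. -/
structure BranchDecomp {V : Type*} (G : SimpleGraph V) where
  B : Type
  finB : Finite B
  T : SimpleGraph B
  isTree : T.IsTree
  subcubic : ∀ b : B, (T.neighborSet b).ncard = 1 ∨ (T.neighborSet b).ncard = 3
  L : {b : B // (T.neighborSet b).ncard = 1} ≃ V

/-- The set of vertices of `G` whose leaves lie on the `u`-side of the tree edge `uw`. -/
noncomputable def BranchDecomp.side {V : Type*} {G : SimpleGraph V} (D : BranchDecomp G)
    (u w : D.B) : Set V :=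
  {x : V | (D.T.deleteEdges {s(u, w)}).Reachable (D.L.symm x).1 u}

/-- The width of a branch-decomposition is at most `k`. -/
def BranchDecomp.widthLE {V : Type*} {G : SimpleGraph V} (D : BranchDecomp G) (k : ℕ) : Prop :=
  ∀ u w : D.B, D.T.Adj u w → mmVal G (D.side u w) ≤ k

/-- The maximum matching width of `G`. -/
noncomputable def mmw {V : Type*} (G : SimpleGraph V) : ℕ :=
  sInf {k | ∃ D : BranchDecomp G, D.widthLE k}
/-- `H` is a minor of `G`: there is a family of nonempty, pairwise disjoint, connected branch
sets in `G` indexed by the vertices of `H`, with edges of `H` realized by edges of `G`. -/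
def IsMinor {W : Type*} {V : Type*} (H : SimpleGraph W) (G : SimpleGraph V) : Prop :=
  ∃ φ : W → Set V,
    (∀ w, (φ w).Nonempty) ∧
    (∀ w, (G.induce (φ w)).Connected) ∧
    (∀ w w', w ≠ w' → Disjoint (φ w) (φ w')) ∧
    (∀ w w', H.Adj w w' → ∃ a ∈ φ w, ∃ b ∈ φ w', G.Adj a b)

/-- The `k × k` grid graph: vertices `(i, j)`, edges between vertices at Manhattan distance 1. -/
def gridGraph (k : ℕ) : SimpleGraph (Fin k × Fin k) :=
  SimpleGraph.fromRel (fun p q =>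
    (p.1 = q.1 ∧ (p.2 : ℕ) + 1 = (q.2 : ℕ)) ∨ (p.2 = q.2 ∧ (p.1 : ℕ) + 1 = (q.1 : ℕ)))

/-- The row `R_j` of the `k × k` grid. -/
def gridRow (k : ℕ) (j : Fin k) : Set (Fin k × Fin k) := {p | p.2 = j}

/-- The column `C_i` of the `k × k` grid. -/
def gridCol (k : ℕ) (i : Fin k) : Set (Fin k × Fin k) := {p | p.1 = i}

/-- `X` is small: `mm(X) < k` and `X` contains no full row. -/
def GridSmall (k : ℕ) (X : Set (Fin k × Fin k)) : Prop :=
  mmVal (gridGraph k) X < k ∧ ∀ j : Fin k, ¬ gridRow k j ⊆ X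

/-- `G` is `k`-connected: `|V(G)| ≥ k` and deleting fewer than `k` vertices leaves `G`
connected. -/
def KConnected {V : Type*} (k : ℕ) (G : SimpleGraph V) : Prop :=
  k ≤ Nat.card V ∧ ∀ X : Set V, X.ncard < k → (G.induce Xᶜ).Connected

/-- A block of `G`: a bridge (with its two endpoints), or a maximal 2-connected induced
subgraph. -/
def IsBlock {V : Type*} (G : SimpleGraph V) (Bs : Set V) : Prop :=
  (∃ a b : V, G.Adj a b ∧ G.IsBridge s(a, b) ∧ Bs = {a, b}) ∨
  (KConnected 2 (G.induce Bs) ∧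
    ∀ B' : Set V, Bs ⊆ B' → KConnected 2 (G.induce B') → B' = Bs)

/-- A tree-representation of `G`: a finite subcubic tree `T` and nontrivial subtrees `F x`
for each vertex `x` such that adjacent vertices have intersecting subtrees. -/
structure TreeRep {V : Type*} (G : SimpleGraph V) where
  B : Type
  finB : Finite B
  T : SimpleGraph B
  isTree : T.IsTree
  subcubic : ∀ b : B, (T.neighborSet b).ncard = 1 ∨ (T.neighborSet b).ncard = 3
  F : V → Set B
  nontrivial : ∀ x : V, ∃ u w : B, u ∈ F x ∧ w ∈ F x ∧ T.Adj u w
  subtree : ∀ x : V, (T.induce (F x)).Connected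
  adjMeet : ∀ x y : V, G.Adj x y → (F x ∩ F y).Nonempty

/-- Every edge of the tree lies in at most `k` of the subtrees. -/
def TreeRep.widthLE {V : Type*} {G : SimpleGraph V} (R : TreeRep G) (k : ℕ) : Prop :=
  ∀ u w : R.B, R.T.Adj u w → {x : V | u ∈ R.F x ∧ w ∈ R.F x}.ncard ≤ k

/-- Contraction of the edge `uv` of `G` (the merged vertex is `u`). -/
def contractEdge {V : Type*} (G : SimpleGraph V) (u v : V) : SimpleGraph {x : V // x ≠ v} :=
  SimpleGraph.fromRel (fun x y =>
    G.Adj x.1 y.1 ∨ (x.1 = u ∧ G.Adj v y.1) ∨ (y.1 = u ∧ G.Adj v x.1))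

/-!
Take a branch-decomposition of `G` of optimal width. Deleting the leaf of `v` and suppressing its
neighbour gives a branch-decomposition of `G/uv` in which every edge induces the restriction to
`V - v` of a bipartition induced by the old tree. Contracting `uv` does not increase the matching
number across a cut, because a cut matching of `G/uv` lifts to one of `G`: an edge at the merged
vertex is replaced by one at `u` or `v`, or by `uv` itself. As `mmw` is an infimum and
`sInf ∅ = 0`, we also need `G` to have a branch-decomposition whenever `G/uv` has one; hanging two
new leaves on any leaf provides it.
-/

def IsCutMatching {V : Type*} (G : SimpleGraph V) (A : Set V) (M : Finset (V × V)) : Prop :=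
  (∀ p ∈ M, p.1 ∈ A ∧ p.2 ∉ A ∧ G.Adj p.1 p.2) ∧
    ∀ p ∈ M, ∀ q ∈ M, p ≠ q → p.1 ≠ q.1 ∧ p.2 ≠ q.2

namespace IsCutMatching

variable {V : Type*} {G : SimpleGraph V} {A : Set V} {M : Finset (V × V)}

lemma card_le [Finite V] (hM : IsCutMatching G A M) : M.card ≤ Nat.card V := by
  classical
  have := Fintype.ofFinite V
  have hinj : Set.InjOn Prod.fst (M : Set (V × V)) := fun p hp q hq h =>
    by_contra fun hpq => (hM.2 p hp q hq hpq).1 h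
  rw [← Finset.card_image_of_injOn hinj, Nat.card_eq_fintype_card]
  exact Finset.card_le_univ _

lemma card_le_mmVal [Finite V] (hM : IsCutMatching G A M) : M.card ≤ mmVal G A :=
  le_csSup ⟨Nat.card V, by rintro n ⟨M, h1, h2, rfl⟩; exact card_le ⟨h1, h2⟩⟩ ⟨M, hM.1, hM.2, rfl⟩

lemma eq_of_shared_vertex {p q : V × V} {w : V} (hM : IsCutMatching G A M) (hp : p ∈ M)
    (hq : q ∈ M) (hpw : p.1 = w ∨ p.2 = w) (hqw : q.1 = w ∨ q.2 = w) : p = q := by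
  by_contra hpq
  obtain ⟨hp1, hp2, -⟩ := hM.1 p hp
  obtain ⟨hq1, hq2, -⟩ := hM.1 q hq
  obtain ⟨h1, h2⟩ := hM.2 p hp q hq hpq
  rcases hpw with rfl | rfl <;> rcases hqw with h | h
  exacts [h1 h.symm, hq2 (h ▸ hp1), hp2 (h ▸ hq1), h2 h.symm]

end IsCutMatching

lemma exists_isCutMatching_card_eq_mmVal {V : Type*} [Finite V] (G : SimpleGraph V) (A : Set V) :
    ∃ M, IsCutMatching G A M ∧ M.card = mmVal G A := by
  have h : mmVal G A ∈ _ := Nat.sSup_mem ⟨0, ∅, by simp, by simp, rfl⟩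
    ⟨Nat.card V, by rintro n ⟨M, h1, h2, rfl⟩; exact IsCutMatching.card_le ⟨h1, h2⟩⟩
  obtain ⟨M, h1, h2, h⟩ := h
  exact ⟨M, ⟨h1, h2⟩, h⟩

lemma mmVal_le_card {V : Type*} [Finite V] (G : SimpleGraph V) (A : Set V) :
    mmVal G A ≤ Nat.card V := by
  obtain ⟨M, hM, h⟩ := exists_isCutMatching_card_eq_mmVal G A
  exact h ▸ hM.card_le

section ContractEdge

variable {V : Type*} {G : SimpleGraph V} {u v : V}

/-- An edge at the merged vertex `u` lifts to an edge at `u` or at `v`; if that puts `v` on the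
wrong side of the cut, the edge `uv` itself crosses it. -/
lemma exists_lift_of_contractEdge_adj (huv : G.Adj u v) {A : Set V} {x y : {x : V // x ≠ v}}
    (hxy : (contractEdge G u v).Adj x y) (hx : x.1 ∈ A) (hy : y.1 ∉ A) :
    ∃ e : V × V, e.1 ∈ A ∧ e.2 ∉ A ∧ G.Adj e.1 e.2 ∧
      (e.1 = x ∨ e.1 = v ∧ (x.1 = u ∨ y.1 = u)) ∧ (e.2 = y ∨ e.2 = v ∧ (x.1 = u ∨ y.1 = u)) := by
  by_cases hG : G.Adj x y
  · exact ⟨(x, y), hx, hy, hG, Or.inl rfl, Or.inl rfl⟩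
  have hmerge : (x.1 = u ∧ G.Adj v y) ∨ (y.1 = u ∧ G.Adj v x) := by
    simp only [contractEdge, fromRel_adj] at hxy
    grind [G.adj_comm]
  by_cases hv : v ∈ A
  · rcases hmerge with ⟨hxu, hvy⟩ | ⟨hyu, hvx⟩
    · exact ⟨(v, y), hv, hy, hvy, by simp [hxu]⟩
    · exact ⟨(v, u), hv, hyu ▸ hy, huv.symm, by simp [hyu]⟩
  · rcases hmerge with ⟨hxu, hvy⟩ | ⟨hyu, hvx⟩
    · exact ⟨(u, v), hxu ▸ hx, hv, huv, by simp [hxu]⟩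
    · exact ⟨(x, v), hx, hv, hvx.symm, by simp [hyu]⟩

lemma mmVal_contractEdge_preimage_le [Finite V] (huv : G.Adj u v) (A : Set V) :
    mmVal (contractEdge G u v) (Subtype.val ⁻¹' A) ≤ mmVal G A := by
  classical
  obtain ⟨M, hM, hcard⟩ :=
    exists_isCutMatching_card_eq_mmVal (contractEdge G u v) (Subtype.val ⁻¹' A)
  choose F hF using fun p : M =>
    exists_lift_of_contractEdge_adj huv (hM.1 p p.2).2.2 (hM.1 p p.2).1 (hM.1 p p.2).2.1
  have hF_ne : ∀ p q : M, p ≠ q → (F p).1 ≠ (F q).1 ∧ (F p).2 ≠ (F q).2 := by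
    intro p q hpq
    -- only one edge of `M` meets the merged vertex, so only one lift can use `v`
    have htouch : (p.1.1.1 = u ∨ p.1.2.1 = u) → (q.1.1.1 = u ∨ q.1.2.1 = u) → False :=
      fun hp hq => hpq <| Subtype.ext <| hM.eq_of_shared_vertex (w := ⟨u, huv.ne⟩) p.2 q.2
        (by simpa [Subtype.ext_iff] using hp) (by simpa [Subtype.ext_iff] using hq)
    obtain ⟨h1, h2⟩ := hM.2 p p.2 q q.2 (Subtype.coe_ne_coe.mpr hpq)
    obtain ⟨-, -, -, hp1, hp2⟩ := hF p
    obtain ⟨-, -, -, hq1, hq2⟩ := hF q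
    constructor
    · rcases hp1 with hp1 | ⟨hp1, hpu⟩ <;> rcases hq1 with hq1 | ⟨hq1, hqu⟩ <;> rw [hp1, hq1]
      exacts [Subtype.coe_ne_coe.mpr h1, p.1.1.2, q.1.1.2.symm, (htouch hpu hqu).elim]
    · rcases hp2 with hp2 | ⟨hp2, hpu⟩ <;> rcases hq2 with hq2 | ⟨hq2, hqu⟩ <;> rw [hp2, hq2]
      exacts [Subtype.coe_ne_coe.mpr h2, p.1.2.2, q.1.2.2.symm, (htouch hpu hqu).elim]
  have hF_inj : Function.Injective F := fun p q h =>
    by_contra fun hpq => (hF_ne p q hpq).1 (congrArg Prod.fst h)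
  rw [← hcard, ← M.card_attach, ← Finset.card_image_of_injective _ hF_inj]
  refine IsCutMatching.card_le_mmVal ⟨?_, ?_⟩
  · simp only [Finset.mem_image, Finset.mem_attach, true_and]
    rintro _ ⟨p, rfl⟩
    exact ⟨(hF p).1, (hF p).2.1, (hF p).2.2.1⟩
  · simp only [Finset.mem_image, Finset.mem_attach, true_and]
    rintro _ ⟨p, rfl⟩ _ ⟨q, rfl⟩ hpq
    exact hF_ne p q fun h => hpq (h ▸ rfl)

end ContractEdge

lemma Set.ne_and_ne_of_mem_compl_pair {α : Type*} {a b x : α} (h : x ∈ ({a, b} : Set α)ᶜ) :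
    x ≠ a ∧ x ≠ b := by
  simpa using h

namespace SimpleGraph

variable {V W : Type*} {G : SimpleGraph V} {H : SimpleGraph W}

lemma Reachable.map_of_forall_adj (f : V → W) (hf : ∀ a b, G.Adj a b → H.Reachable (f a) (f b))
    {x y : V} (h : G.Reachable x y) : H.Reachable (f x) (f y) := by
  rw [reachable_iff_reflTransGen] at h ⊢
  exact h.lift' f fun a b hab => (reachable_iff_reflTransGen _ _).mp (hf a b hab)

lemma Reachable.deleteEdges_or {x y z : V} (h : G.Reachable z x) :
    (G.deleteEdges {s(x, y)}).Reachable z x ∨ (G.deleteEdges {s(x, y)}).Reachable z y := by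
  obtain ⟨p⟩ := h
  induction p with
  | nil => exact Or.inl .rfl
  | @cons z w x hzw _ ih =>
    by_cases he : s(z, w) = s(x, y)
    · rcases Sym2.eq_iff.mp he with ⟨hzx, -⟩ | ⟨hzy, -⟩
      exacts [Or.inl (hzx ▸ .rfl), Or.inr (hzy ▸ .rfl)]
    · have hzw' : (G.deleteEdges {s(x, y)}).Adj z w := deleteEdges_adj.mpr ⟨hzw, he⟩
      exact ih.imp hzw'.reachable.trans hzw'.reachable.trans

lemma IsAcyclic.not_reachable_deleteEdges (hG : G.IsAcyclic) {x y : V} (h : G.Adj x y) :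
    ¬ (G.deleteEdges {s(x, y)}).Reachable x y :=
  isBridge_iff.mp (isAcyclic_iff_forall_adj_isBridge.mp hG h)

lemma IsAcyclic.not_adj_of_adj_of_adj (hG : G.IsAcyclic) {s a b : V} (ha : G.Adj s a)
    (hb : G.Adj s b) (hab : a ≠ b) : ¬ G.Adj a b := fun h =>
  hG.not_reachable_deleteEdges h <|
    (deleteEdges_adj.mpr ⟨ha.symm, by simp [hab, ha.ne, hb.ne]⟩).reachable.trans
      (deleteEdges_adj.mpr ⟨hb, by simp [hab.symm, ha.ne, hb.ne]⟩).reachable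

/-- The sides of `xy` cover `V` and the sides of the bridge `x'y'` are disjoint, so a map sending
each side of `xy` into the corresponding side of `x'y'` identifies the `x`-side with the preimage
of the `x'`-side. -/
lemma reachable_deleteEdges_iff_of_map (hG : G.Connected) {x y : V} {x' y' : W}
    (hH : ¬ (H.deleteEdges {s(x', y')}).Reachable x' y') (f : V → W)
    (hf : ∀ a b, (G.deleteEdges {s(x, y)}).Adj a b →
      (H.deleteEdges {s(x', y')}).Reachable (f a) (f b))
    (hx : (H.deleteEdges {s(x', y')}).Reachable (f x) x')
    (hy : (H.deleteEdges {s(x', y')}).Reachable (f y) y') (z : V) :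
    (G.deleteEdges {s(x, y)}).Reachable z x ↔ (H.deleteEdges {s(x', y')}).Reachable (f z) x' := by
  refine ⟨fun h => (h.map_of_forall_adj f hf).trans hx, fun h => ?_⟩
  refine ((hG z x).deleteEdges_or (y := y)).resolve_right fun hzy => hH ?_
  exact h.symm.trans ((hzy.map_of_forall_adj f hf).trans hy)

lemma Connected.eq_or_eq_of_neighborSet_eq (hG : G.Connected) {x y : V}
    (hx : G.neighborSet x = {y}) (hy : G.neighborSet y = {x}) (z : V) : z = x ∨ z = y := by
  induction (reachable_iff_reflTransGen _ _).mp (hG x z) with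
  | refl => exact Or.inl rfl
  | tail _ hbc ih =>
    have hbc : _ ∈ G.neighborSet _ := hbc
    rcases ih with rfl | rfl
    · rw [hx] at hbc; exact Or.inr hbc
    · rw [hy] at hbc; exact Or.inl hbc

lemma ncard_neighborSet_eq_degree (v : V) [Fintype (G.neighborSet v)] :
    (G.neighborSet v).ncard = G.degree v := by
  rw [← Nat.card_coe_set_eq, Nat.card_eq_fintype_card, card_neighborSet_eq_degree]

lemma isTree_iff_connected_and_sum_ncard [Fintype V] :
    G.IsTree ↔ G.Connected ∧ ∑ v, (G.neighborSet v).ncard + 2 = 2 * Fintype.card V := by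
  classical
  simp_rw [ncard_neighborSet_eq_degree, sum_degrees_eq_twice_card_edges,
    isTree_iff_connected_and_card, Nat.card_eq_fintype_card, edgeFinset_card]
  exact and_congr_right fun _ => by omega

lemma IsTree.card_add_two_eq_two_mul_card_leaves [Finite V] (hG : G.IsTree)
    (hdeg : ∀ v, (G.neighborSet v).ncard = 1 ∨ (G.neighborSet v).ncard = 3) :
    Nat.card V + 2 = 2 * Nat.card {v // (G.neighborSet v).ncard = 1} := by
  classical
  have := Fintype.ofFinite V
  have hsum := (isTree_iff_connected_and_sum_ncard.mp hG).2
  have h3 : ∑ v, ((G.neighborSet v).ncard + 2 * if (G.neighborSet v).ncard = 1 then 1 else 0) =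
      ∑ _v : V, 3 :=
    Finset.sum_congr rfl fun v _ => by rcases hdeg v with h | h <;> simp [h]
  rw [Finset.sum_add_distrib, ← Finset.mul_sum, Finset.sum_boole, Finset.sum_const,
    Finset.card_univ, smul_eq_mul, Nat.cast_id] at h3
  rw [Nat.card_eq_fintype_card, Nat.card_eq_fintype_card, Fintype.card_subtype]
  omega

section PruneLeaf

variable {B : Type*} {T : SimpleGraph B} {t s a b : B}

/-- Delete the leaf `t` and suppress its neighbour `s`, whose other neighbours are `a` and `b`. -/
def pruneLeaf (T : SimpleGraph B) (t s a b : B) : SimpleGraph ↥({t, s}ᶜ : Set B) :=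
  (T ⊔ edge a b).induce {t, s}ᶜ

lemma pruneLeaf_adj {x y : ↥({t, s}ᶜ : Set B)} :
    (pruneLeaf T t s a b).Adj x y ↔ T.Adj x y ∨ (edge a b).Adj x y := Iff.rfl

lemma pruneLeaf_comm : pruneLeaf T t s a b = pruneLeaf T t s b a := by
  rw [pruneLeaf, pruneLeaf, edge_comm]

lemma pruneLeaf_connected (hT : T.Connected) (ht : T.neighborSet t = {s})
    (hs : T.neighborSet s = {t, a, b}) (hat : a ≠ t) (hbt : b ≠ t) (hab : a ≠ b) :
    (pruneLeaf T t s a b).Connected := by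
  classical
  have hsa : T.Adj s a := by simp [← mem_neighborSet, hs]
  have hsb : T.Adj s b := by simp [← mem_neighborSet, hs]
  have ha : a ∈ ({t, s}ᶜ : Set B) := by simp [hat, hsa.ne']
  have hb : b ∈ ({t, s}ᶜ : Set B) := by simp [hbt, hsb.ne']
  let f : B → ↥({t, s}ᶜ : Set B) := fun z =>
    if hz : z ∈ ({t, s}ᶜ : Set B) then ⟨z, hz⟩ else ⟨a, ha⟩
  have hf_mem : ∀ z (hz : z ∈ ({t, s}ᶜ : Set B)), f z = ⟨z, hz⟩ := fun z hz => dif_pos hz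
  have hft : f t = ⟨a, ha⟩ := dif_neg (by simp)
  have hfs : f s = ⟨a, ha⟩ := dif_neg (by simp)
  have hf_out : ∀ p q, T.Adj p q → p = t ∨ p = s →
      (pruneLeaf T t s a b).Reachable (f p) (f q) := by
    rintro p q hpq (hp | hp) <;> rw [hp] at hpq ⊢
    · rw [hft, show q = s by rwa [← mem_neighborSet, ht] at hpq, hfs]
    · have hq : q ∈ ({t, a, b} : Set B) := hs ▸ hpq
      rcases hq with hq | hq | hq <;> rw [hq, hfs]
      · rw [hft]
      · rw [hf_mem _ ha]
      · rw [hf_mem _ hb]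
        exact Adj.reachable (by simp [pruneLeaf_adj, edge_adj, hab])
  have hf : ∀ p q, T.Adj p q → (pruneLeaf T t s a b).Reachable (f p) (f q) := by
    intro p q hpq
    by_cases hp : p = t ∨ p = s
    · exact hf_out p q hpq hp
    by_cases hq : q = t ∨ q = s
    · exact (hf_out q p hpq.symm hq).symm
    rw [hf_mem p (by simpa using hp), hf_mem q (by simpa using hq)]
    exact (pruneLeaf_adj.mpr (Or.inl hpq)).reachable
  have : Nonempty ↥({t, s}ᶜ : Set B) := ⟨⟨a, ha⟩⟩
  refine ⟨fun x y => ?_⟩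
  simpa only [hf_mem _ x.2, hf_mem _ y.2] using (hT x y).map_of_forall_adj f hf
lemma ncard_neighborSet_pruneLeaf_of_ne (hT : T.IsAcyclic) (ht : T.neighborSet t = {s})
    (hs : T.neighborSet s = {t, a, b}) (hbt : b ≠ t) (hab : a ≠ b)
    (z : ↥({t, s}ᶜ : Set B)) (hzb : z.1 ≠ b) :
    ((pruneLeaf T t s a b).neighborSet z).ncard = (T.neighborSet z).ncard := by
  have ht' : ∀ w, T.Adj t w ↔ w = s := fun w => by rw [← mem_neighborSet, ht, Set.mem_singleton_iff]
  have hs' : ∀ w, T.Adj s w ↔ w = t ∨ w = a ∨ w = b := fun w => by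
    rw [← mem_neighborSet, hs]; rfl
  have hsa : T.Adj s a := (hs' a).mpr (by simp)
  have hsb : T.Adj s b := (hs' b).mpr (by simp)
  have has := hsa.ne'
  have hbs := hsb.ne'
  have hz := Set.ne_and_ne_of_mem_compl_pair z.2
  rw [← Set.ncard_image_of_injective _ Subtype.val_injective]
  by_cases hza : z.1 = a
  · have himage : Subtype.val '' (pruneLeaf T t s a b).neighborSet z =
        insert b (T.neighborSet a \ {s}) := by
      ext w
      simp only [Set.mem_image, mem_neighborSet, pruneLeaf_adj, edge_adj, ne_eq, Subtype.exists,
        Set.mem_compl_iff, Set.mem_insert_iff, Set.mem_singleton_iff, not_or, exists_and_left,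
        exists_prop, exists_eq_right_right, Set.mem_sdiff]
      grind [SimpleGraph.adj_comm, SimpleGraph.irrefl]
    rw [himage, hza, Set.ncard_exchange]
    · exact hT.not_adj_of_adj_of_adj hsa hsb hab
    · exact hsa.symm
  · have himage : Subtype.val '' (pruneLeaf T t s a b).neighborSet z = T.neighborSet z := by
      ext w
      simp only [Set.mem_image, mem_neighborSet, pruneLeaf_adj, edge_adj, ne_eq, Subtype.exists,
        Set.mem_compl_iff, Set.mem_insert_iff, Set.mem_singleton_iff, not_or, exists_and_left,
        exists_prop, exists_eq_right_right]
      grind [SimpleGraph.adj_comm, SimpleGraph.irrefl]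
    rw [himage]

lemma ncard_neighborSet_pruneLeaf (hT : T.IsAcyclic) (ht : T.neighborSet t = {s})
    (hs : T.neighborSet s = {t, a, b}) (hat : a ≠ t) (hbt : b ≠ t) (hab : a ≠ b)
    (z : ↥({t, s}ᶜ : Set B)) :
    ((pruneLeaf T t s a b).neighborSet z).ncard = (T.neighborSet z).ncard := by
  by_cases hzb : z.1 = b
  · rw [pruneLeaf_comm]
    exact ncard_neighborSet_pruneLeaf_of_ne hT ht (by rw [hs, Set.pair_comm]) hat hab.symm z
      fun hza => hab (hza.symm.trans hzb)
  · exact ncard_neighborSet_pruneLeaf_of_ne hT ht hs hbt hab z hzb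

lemma pruneLeaf_isTree [Finite B] (hT : T.IsTree) (ht : T.neighborSet t = {s})
    (hs : T.neighborSet s = {t, a, b}) (hat : a ≠ t) (hbt : b ≠ t) (hab : a ≠ b) :
    (pruneLeaf T t s a b).IsTree := by
  classical
  have := Fintype.ofFinite B
  have hts : t ≠ s := (show T.Adj t s by simp [← mem_neighborSet, ht]).ne
  have hsum := (isTree_iff_connected_and_sum_ncard.mp hT).2
  have hmem : ∀ z, z ∈ ({t, s} : Finset B)ᶜ ↔ z ∈ ({t, s}ᶜ : Set B) := fun z => by simp
  rw [isTree_iff_connected_and_sum_ncard]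
  refine ⟨pruneLeaf_connected hT.connected ht hs hat hbt hab, ?_⟩
  simp_rw [ncard_neighborSet_pruneLeaf hT.isAcyclic ht hs hat hbt hab]
  rw [← Finset.sum_subtype _ hmem (fun z => (T.neighborSet z).ncard),
    Fintype.card_of_subtype _ hmem, Finset.card_compl, Finset.card_pair hts]
  rw [← Finset.sum_compl_add_sum {t, s}, Finset.sum_pair hts, ht, hs,
    Set.ncard_singleton, Set.ncard_eq_three.mpr ⟨t, a, b, hat.symm, hbt.symm, hab, rfl⟩] at hsum
  have : 2 ≤ Fintype.card B := by
    rw [← Finset.card_pair hts]; exact Finset.card_le_univ _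
  omega

lemma adj_of_neighborSet_eq_of_edge_adj (hs : T.neighborSet s = {t, a, b}) {x y : B}
    (hxy : (edge a b).Adj x y) : T.Adj s x := by
  rw [← mem_neighborSet, hs]
  rw [edge_adj] at hxy
  simp only [Set.mem_insert_iff, Set.mem_singleton_iff]
  tauto

lemma reachable_deleteEdges_pruneLeaf_iff_of_adj (hT : T.IsTree) (ht : T.neighborSet t = {s})
    (hs : T.neighborSet s = {t, a, b}) (hat : a ≠ t) (hbt : b ≠ t) (hab : a ≠ b)
    {x y : ↥({t, s}ᶜ : Set B)} (hxy : T.Adj x y) (z : ↥({t, s}ᶜ : Set B)) :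
    ((pruneLeaf T t s a b).deleteEdges {s(x, y)}).Reachable z x ↔
      (T.deleteEdges {s(x.1, y.1)}).Reachable z x := by
  refine reachable_deleteEdges_iff_of_map (pruneLeaf_connected hT.connected ht hs hat hbt hab)
    (hT.isAcyclic.not_reachable_deleteEdges hxy) Subtype.val ?_ .rfl .rfl z
  intro p q hpq
  rw [deleteEdges_adj, pruneLeaf_adj] at hpq
  obtain ⟨hpq | hpq, hne⟩ := hpq
  · refine (deleteEdges_adj.mpr ⟨hpq, ?_⟩).reachable
    simpa [Sym2.eq_iff, Subtype.ext_iff] using hne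
  -- the new edge `ab` is replaced by the path through `s`, which avoids `xy`
  have hsp := adj_of_neighborSet_eq_of_edge_adj hs hpq
  have hsq := adj_of_neighborSet_eq_of_edge_adj hs hpq.symm
  have hxs := (Set.ne_and_ne_of_mem_compl_pair x.2).2
  have hys := (Set.ne_and_ne_of_mem_compl_pair y.2).2
  refine (deleteEdges_adj.mpr ⟨hsp.symm, ?_⟩).reachable.trans
    (deleteEdges_adj.mpr ⟨hsq, ?_⟩).reachable <;> simp [hxs.symm, hys.symm]

lemma reachable_deleteEdges_pruneLeaf_iff_of_edge_adj (hT : T.IsTree)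
    (ht : T.neighborSet t = {s}) (hs : T.neighborSet s = {t, a, b}) (hat : a ≠ t) (hbt : b ≠ t)
    (hab : a ≠ b) {x y : ↥({t, s}ᶜ : Set B)} (hxy : (edge a b).Adj x y)
    (z : ↥({t, s}ᶜ : Set B)) :
    ((pruneLeaf T t s a b).deleteEdges {s(x, y)}).Reachable z x ↔
      (T.deleteEdges {s(x.1, s)}).Reachable z x := by
  have hsx := adj_of_neighborSet_eq_of_edge_adj hs hxy
  have hsy := adj_of_neighborSet_eq_of_edge_adj hs hxy.symm
  have hys := (Set.ne_and_ne_of_mem_compl_pair y.2).2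
  refine reachable_deleteEdges_iff_of_map (pruneLeaf_connected hT.connected ht hs hat hbt hab)
    (hT.isAcyclic.not_reachable_deleteEdges hsx.symm) Subtype.val ?_ .rfl
    (deleteEdges_adj.mpr ⟨hsy.symm, ?_⟩).reachable z
  · intro p q hpq
    have hps := (Set.ne_and_ne_of_mem_compl_pair p.2).2
    have hqs := (Set.ne_and_ne_of_mem_compl_pair q.2).2
    rw [deleteEdges_adj, pruneLeaf_adj] at hpq
    obtain ⟨hpq | hpq, hne⟩ := hpq
    · refine (deleteEdges_adj.mpr ⟨hpq, ?_⟩).reachable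
      simp [hps, hqs]
    · rw [edge_adj] at hpq hxy
      simp only [Set.mem_singleton_iff, Sym2.eq, Sym2.rel_iff', Prod.mk.injEq, Subtype.ext_iff,
        Prod.swap_prod_mk, not_or, not_and] at hne
      grind
  · simp [hys, hxy.ne.symm]

lemma exists_adj_reachable_deleteEdges_pruneLeaf_iff (hT : T.IsTree)
    (ht : T.neighborSet t = {s}) (hs : T.neighborSet s = {t, a, b}) (hat : a ≠ t) (hbt : b ≠ t)
    (hab : a ≠ b) {x y : ↥({t, s}ᶜ : Set B)} (hxy : (pruneLeaf T t s a b).Adj x y) :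
    ∃ x' y', T.Adj x' y' ∧ ∀ z : ↥({t, s}ᶜ : Set B),
      ((pruneLeaf T t s a b).deleteEdges {s(x, y)}).Reachable z x ↔
        (T.deleteEdges {s(x', y')}).Reachable z x' := by
  rcases pruneLeaf_adj.mp hxy with hold | hnew
  · exact ⟨x, y, hold, reachable_deleteEdges_pruneLeaf_iff_of_adj hT ht hs hat hbt hab hold⟩
  · exact ⟨x, s, (adj_of_neighborSet_eq_of_edge_adj hs hnew).symm,
      reachable_deleteEdges_pruneLeaf_iff_of_edge_adj hT ht hs hat hbt hab hnew⟩

lemma Connected.exists_neighborSet_eq_of_leaf (hT : T.Connected)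
    (hdeg : ∀ b, (T.neighborSet b).ncard = 1 ∨ (T.neighborSet b).ncard = 3)
    (ht : (T.neighborSet t).ncard = 1) (hB : 2 < Nat.card B) :
    ∃ s a b, T.neighborSet t = {s} ∧ T.neighborSet s = {t, a, b} ∧ a ≠ t ∧ b ≠ t ∧ a ≠ b := by
  obtain ⟨s, hts⟩ := Set.ncard_eq_one.mp ht
  have hst : t ∈ T.neighborSet s := (show T.Adj t s by simp [← mem_neighborSet, hts]).symm
  rcases hdeg s with h1 | h3
  · obtain ⟨w, hw⟩ := Set.ncard_eq_one.mp h1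
    obtain rfl : t = w := by rw [hw] at hst; exact hst
    have hcover := hT.eq_or_eq_of_neighborSet_eq hts hw
    have : Nat.card B ≤ Nat.card Bool := Nat.card_le_card_of_surjective
      (fun i : Bool => if i then t else s) fun z => by
        rcases hcover z with rfl | rfl
        exacts [⟨true, rfl⟩, ⟨false, rfl⟩]
    rw [Nat.card_eq_fintype_card (α := Bool), Fintype.card_bool] at this
    omega
  · obtain ⟨x, y, z, hxy, hxz, hyz, hxyz⟩ := Set.ncard_eq_three.mp h3
    rw [hxyz] at hst
    rcases hst with rfl | rfl | rfl
    · exact ⟨s, y, z, hts, hxyz, hxy.symm, hxz.symm, hyz⟩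
    · exact ⟨s, x, z, hts, by rw [hxyz, Set.insert_comm], hxy, hyz.symm, hxz⟩
    · exact ⟨s, x, y, hts, by rw [hxyz, Set.pair_comm, Set.insert_comm], hxz, hyz, hxy⟩

end PruneLeaf
section AttachLeaves

variable {B : Type*} {T : SimpleGraph B} {ℓ : B}

def attachLeaves (T : SimpleGraph B) (ℓ : B) : SimpleGraph (B ⊕ Bool) where
  Adj
    | .inl x, .inl y => T.Adj x y
    | .inl x, .inr _ => x = ℓ
    | .inr _, .inl y => y = ℓ
    | .inr _, .inr _ => False
  symm := ⟨by rintro (x | x) (y | y) h <;> first | exact h.symm | exact h⟩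
  loopless := ⟨by rintro (x | x) h; exacts [T.irrefl h, h]⟩

@[simp] lemma attachLeaves_adj_inl_inl {x y : B} :
    (attachLeaves T ℓ).Adj (.inl x) (.inl y) ↔ T.Adj x y := Iff.rfl

@[simp] lemma attachLeaves_adj_inl_inr {x : B} {i : Bool} :
    (attachLeaves T ℓ).Adj (.inl x) (.inr i) ↔ x = ℓ := Iff.rfl

@[simp] lemma attachLeaves_adj_inr_inl {y : B} {i : Bool} :
    (attachLeaves T ℓ).Adj (.inr i) (.inl y) ↔ y = ℓ := Iff.rfl

@[simp] lemma attachLeaves_adj_inr_inr {i j : Bool} :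
    ¬ (attachLeaves T ℓ).Adj (.inr i) (.inr j) := id

lemma attachLeaves_connected (hT : T.Connected) : (attachLeaves T ℓ).Connected := by
  have hℓ : ∀ z, (attachLeaves T ℓ).Reachable z (.inl ℓ) := by
    rintro (x | i)
    · exact (hT x ℓ).map_of_forall_adj Sum.inl fun p q h => Adj.reachable (by simpa using h)
    · exact Adj.reachable (by simp)
  have : Nonempty (B ⊕ Bool) := ⟨.inl ℓ⟩
  exact ⟨fun x y => (hℓ x).trans (hℓ y).symm⟩

lemma ncard_neighborSet_attachLeaves_inl_self [Finite B] :
    ((attachLeaves T ℓ).neighborSet (.inl ℓ)).ncard = (T.neighborSet ℓ).ncard + 2 := by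
  have : (attachLeaves T ℓ).neighborSet (.inl ℓ) =
      insert (.inr true) (insert (.inr false) (Sum.inl '' T.neighborSet ℓ)) := by
    ext (y | i) <;> simp
  rw [this, Set.ncard_insert_of_notMem (by simp), Set.ncard_insert_of_notMem (by simp),
    Set.ncard_image_of_injective _ Sum.inl_injective]

lemma ncard_neighborSet_attachLeaves_inl {x : B} (hx : x ≠ ℓ) :
    ((attachLeaves T ℓ).neighborSet (.inl x)).ncard = (T.neighborSet x).ncard := by
  have : (attachLeaves T ℓ).neighborSet (.inl x) = Sum.inl '' T.neighborSet x := by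
    ext (y | i) <;> simp [hx]
  rw [this, Set.ncard_image_of_injective _ Sum.inl_injective]

lemma ncard_neighborSet_attachLeaves_inr (i : Bool) :
    ((attachLeaves T ℓ).neighborSet (.inr i)).ncard = 1 := by
  rw [Set.ncard_eq_one]
  exact ⟨.inl ℓ, by ext (y | j) <;> simp⟩

lemma attachLeaves_isTree [Finite B] (hT : T.IsTree) : (attachLeaves T ℓ).IsTree := by
  classical
  have := Fintype.ofFinite B
  have hsum := (isTree_iff_connected_and_sum_ncard.mp hT).2
  rw [isTree_iff_connected_and_sum_ncard]
  refine ⟨attachLeaves_connected hT.connected, ?_⟩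
  have hinl : ∀ x, ((attachLeaves T ℓ).neighborSet (.inl x)).ncard =
      (T.neighborSet x).ncard + if x = ℓ then 2 else 0 := fun x => by
    split_ifs with hx
    · exact hx ▸ ncard_neighborSet_attachLeaves_inl_self
    · exact ncard_neighborSet_attachLeaves_inl hx
  simp only [Fintype.sum_sum_type, hinl, ncard_neighborSet_attachLeaves_inr,
    Finset.sum_add_distrib, Finset.sum_ite_eq', Finset.mem_univ, if_true, Fintype.card_sum,
    Fintype.card_bool, Finset.sum_const, Finset.card_univ, smul_eq_mul]
  omega

end AttachLeaves

end SimpleGraph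

namespace BranchDecomp

variable {V W : Type*} {G : SimpleGraph V}

lemma card_add_two_eq (D : BranchDecomp G) : Nat.card D.B + 2 = 2 * Nat.card V := by
  have := D.finB
  rw [← Nat.card_congr D.L]
  exact D.isTree.card_add_two_eq_two_mul_card_leaves D.subcubic

lemma two_le_card (D : BranchDecomp G) : 2 ≤ Nat.card V := by
  have := D.finB
  have := D.isTree.connected.nonempty
  have := D.card_add_two_eq
  have : 0 < Nat.card D.B := Nat.card_pos
  omega

lemma widthLE_card [Finite V] (D : BranchDecomp G) : D.widthLE (Nat.card V) :=
  fun _ _ _ => mmVal_le_card G _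

/-- Hanging two leaves on a leaf of `D` gives a subcubic tree with one more leaf; any bijection
between its leaves and `V` will do. -/
lemma nonempty_of_card_eq_add_one {H : SimpleGraph W} (D : BranchDecomp H) (G : SimpleGraph V)
    (hV : Nat.card V = Nat.card W + 1) : Nonempty (BranchDecomp G) := by
  have := D.finB
  have hW := D.card_add_two_eq
  have : Nonempty W := (Nat.card_pos_iff.mp (by linarith [D.two_le_card])).1
  have : Finite V := Nat.finite_of_card_ne_zero (by omega)
  let ℓ := D.L.symm (Classical.arbitrary W)
  have htree := attachLeaves_isTree (ℓ := ℓ.1) D.isTree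
  have hdeg : ∀ z, ((attachLeaves D.T ℓ).neighborSet z).ncard = 1 ∨
      ((attachLeaves D.T ℓ).neighborSet z).ncard = 3 := by
    rintro (x | i)
    · by_cases hx : x = ℓ.1
      · rw [hx, ncard_neighborSet_attachLeaves_inl_self, ℓ.2]
        exact Or.inr rfl
      · rw [ncard_neighborSet_attachLeaves_inl hx]
        exact D.subcubic x
    · exact Or.inl (ncard_neighborSet_attachLeaves_inr i)
  have hleaves := htree.card_add_two_eq_two_mul_card_leaves hdeg
  rw [Nat.card_sum, Nat.card_eq_fintype_card (α := Bool), Fintype.card_bool] at hleaves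
  obtain ⟨L⟩ := Finite.card_eq.mp
    (show Nat.card {z // ((attachLeaves D.T ℓ).neighborSet z).ncard = 1} = Nat.card V by omega)
  exact ⟨⟨D.B ⊕ Bool, inferInstance, attachLeaves D.T ℓ, htree, hdeg, L⟩⟩

section DeleteLeaf

variable {v : V} (D : BranchDecomp G) {s a b : D.B}

lemma coe_symm_L_notMem (hs : (D.T.neighborSet s).ncard = 3) {x : V} (hx : x ≠ v) :
    (D.L.symm x : D.B) ∉ ({↑(D.L.symm v), s} : Set D.B) := by
  simp only [Set.mem_insert_iff, Set.mem_singleton_iff, not_or]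
  refine ⟨fun h => hx (D.L.symm.injective (Subtype.ext h)), fun h => ?_⟩
  have := (D.L.symm x).2
  rw [h, hs] at this
  omega

noncomputable def deleteLeaf (H : SimpleGraph {x // x ≠ v})
    (ht : D.T.neighborSet (D.L.symm v) = {s}) (hs : D.T.neighborSet s = {↑(D.L.symm v), a, b})
    (hat : a ≠ D.L.symm v) (hbt : b ≠ D.L.symm v) (hab : a ≠ b) : BranchDecomp H where
  B := ↥({↑(D.L.symm v), s}ᶜ : Set D.B)
  finB := have := D.finB; inferInstance
  T := pruneLeaf D.T (D.L.symm v) s a b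
  isTree := have := D.finB; pruneLeaf_isTree D.isTree ht hs hat hbt hab
  subcubic z := ncard_neighborSet_pruneLeaf D.isTree.isAcyclic ht hs hat hbt hab z ▸ D.subcubic z
  L :=
    { toFun := fun z => ⟨D.L ⟨z.1, (ncard_neighborSet_pruneLeaf D.isTree.isAcyclic ht hs hat hbt
          hab z.1).symm.trans z.2⟩,
        fun h => z.1.2 (Or.inl (congrArg Subtype.val (D.L.symm_apply_eq.mpr h.symm)).symm)⟩
      invFun := fun x => ⟨⟨D.L.symm x, D.coe_symm_L_notMem (by
          rw [hs]; exact Set.ncard_eq_three.mpr ⟨_, _, _, hat.symm, hbt.symm, hab, rfl⟩) x.2⟩,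
        (ncard_neighborSet_pruneLeaf D.isTree.isAcyclic ht hs hat hbt hab _).trans
          (D.L.symm x).2⟩
      left_inv := fun z => by simp
      right_inv := fun x => by simp }

lemma exists_adj_side_deleteLeaf_eq (H : SimpleGraph {x // x ≠ v})
    (ht : D.T.neighborSet (D.L.symm v) = {s}) (hs : D.T.neighborSet s = {↑(D.L.symm v), a, b})
    (hat : a ≠ D.L.symm v) (hbt : b ≠ D.L.symm v) (hab : a ≠ b)
    {x y : (D.deleteLeaf H ht hs hat hbt hab).B}
    (hxy : (D.deleteLeaf H ht hs hat hbt hab).T.Adj x y) :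
    ∃ x' y', D.T.Adj x' y' ∧
      (D.deleteLeaf H ht hs hat hbt hab).side x y = Subtype.val ⁻¹' D.side x' y' := by
  obtain ⟨x', y', hadj, hiff⟩ :=
    exists_adj_reachable_deleteEdges_pruneLeaf_iff D.isTree ht hs hat hbt hab hxy
  exact ⟨x', y', hadj, Set.ext fun z => hiff _⟩

lemma widthLE_deleteLeaf_contractEdge [Finite V] {u : V} (huv : G.Adj u v)
    (ht : D.T.neighborSet (D.L.symm v) = {s}) (hs : D.T.neighborSet s = {↑(D.L.symm v), a, b})
    (hat : a ≠ D.L.symm v) (hbt : b ≠ D.L.symm v) (hab : a ≠ b) {k : ℕ} (hD : D.widthLE k) :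
    (D.deleteLeaf (contractEdge G u v) ht hs hat hbt hab).widthLE k := by
  intro x y hxy
  obtain ⟨x', y', hadj, hside⟩ := D.exists_adj_side_deleteLeaf_eq _ ht hs hat hbt hab hxy
  rw [hside]
  exact (mmVal_contractEdge_preimage_le huv _).trans (hD x' y' hadj)

end DeleteLeaf

lemma exists_widthLE_contractEdge [Finite V] (D : BranchDecomp G) {u v : V} (huv : G.Adj u v)
    (hV : 3 ≤ Nat.card V) {k : ℕ} (hD : D.widthLE k) :
    ∃ D' : BranchDecomp (contractEdge G u v), D'.widthLE k := by
  have := D.card_add_two_eq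
  obtain ⟨s, a, b, ht, hs, hat, hbt, hab⟩ :=
    D.isTree.connected.exists_neighborSet_eq_of_leaf D.subcubic (D.L.symm v).2 (by omega)
  exact ⟨_, D.widthLE_deleteLeaf_contractEdge huv ht hs hat hbt hab hD⟩

end BranchDecomp

/-- contracting an edge does not increase mm-width. -/
theorem mmw_contractEdge_le {V : Type} [Finite V] (G : SimpleGraph V) (u v : V)
    (huv : G.Adj u v) : mmw (contractEdge G u v) ≤ mmw G := by
  rcases Set.eq_empty_or_nonempty
    {k | ∃ D : BranchDecomp (contractEdge G u v), D.widthLE k} with h | ⟨_, D₀, -⟩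
  · -- without branch-decompositions, `mmw` is `sInf ∅ = 0`
    simp [mmw, h]
  have hcard : Nat.card V = Nat.card {x // x ≠ v} + 1 := by
    classical
    rw [← Nat.card_congr (Equiv.optionSubtypeNe v), Finite.card_option]
  obtain ⟨D₁⟩ := D₀.nonempty_of_card_eq_add_one G hcard
  obtain ⟨D, hD⟩ := Nat.sInf_mem (s := {k | ∃ D : BranchDecomp G, D.widthLE k})
    ⟨_, D₁, D₁.widthLE_card⟩
  exact Nat.sInf_le (D.exists_widthLE_contractEdge huv (by linarith [D₀.two_le_card]) hD)
end

section
/- For every positive integer n, the complete graph K_{3n} has maximum matching width at most n; in particular, every graph on at most 6 vertices has maximum matching width at most 2. -/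
open SimpleGraph

/-!
The mm-value of a cut `(A, Aᶜ)` is at most `min |A| |Aᶜ|`, since a matching of crossing edges
is injective on both sides. So a graph on `3n` vertices (whatever its edges) has mm-width at most
`n` as soon as there is a subcubic tree with `3n` leaves in which every edge cuts off at most `n`
leaves on one of its sides. Such a tree is a root with three pendant combs of `n` leaves each:
an edge inside an arm separates part of that arm from the rest. A graph on at most `2n + 1`
vertices has mm-width at most `n` outright, which covers `n = 1` and the graphs on at most five
vertices.
-/

structure ParentTree (B : Type*) where
  parent : B → Option B
  height : B → ℕ
  height_lt_of_parent : ∀ {a b}, parent b = some a → height a < height b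
  root : B
  parent_eq_none_iff : ∀ {b}, parent b = none ↔ b = root

namespace ParentTree

variable {B : Type*} (T : ParentTree B)

def graph : SimpleGraph B := SimpleGraph.fromRel fun a b => T.parent b = some a

def children (b : B) : Set B := {c | T.parent c = some b}

def descendants (c : B) : Set B :=
  {b | Relation.ReflTransGen (fun x y => T.parent y = some x) c b}

variable {T}

lemma ne_of_parent_eq_some {a b : B} (h : T.parent b = some a) : a ≠ b :=
  fun hab => (T.height_lt_of_parent h).ne (congrArg T.height hab)

lemma ne_root_of_parent_eq_some {a b : B} (h : T.parent b = some a) : b ≠ T.root :=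
  fun hb => by simp [T.parent_eq_none_iff.mpr hb] at h

lemma graph_adj {a b : B} : T.graph.Adj a b ↔ T.parent b = some a ∨ T.parent a = some b := by
  rw [graph, fromRel_adj, and_iff_right_iff_imp]
  rintro (h | h)
  exacts [ne_of_parent_eq_some h, (ne_of_parent_eq_some h).symm]

lemma reachable_root_deleteEdges {S : Set (Sym2 B)} (P : B → Prop)
    (hP : ∀ a p, P a → T.parent a = some p → P p ∧ s(a, p) ∉ S) (b : B) (hb : P b) :
    (T.graph.deleteEdges S).Reachable b T.root := by
  cases hpar : T.parent b with
  | none => rw [T.parent_eq_none_iff.mp hpar]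
  | some p =>
    obtain ⟨hPp, hS⟩ := hP b p hb hpar
    have hadj : (T.graph.deleteEdges S).Adj b p :=
      (deleteEdges_adj ..).mpr ⟨graph_adj.mpr (Or.inr hpar), hS⟩
    exact hadj.reachable.trans (reachable_root_deleteEdges P hP p hPp)
termination_by T.height b
decreasing_by exact T.height_lt_of_parent hpar

lemma graph_connected : T.graph.Connected := by
  have h (b : B) : T.graph.Reachable b T.root := by
    simpa using reachable_root_deleteEdges (S := ∅) (fun _ => True)
      (fun _ _ _ _ => ⟨trivial, id⟩) b trivial
  exact (connected_iff _).mpr ⟨fun a b => (h a).trans (h b).symm, ⟨T.root⟩⟩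

lemma mem_descendants_self (c : B) : c ∈ T.descendants c := Relation.ReflTransGen.refl

lemma height_le_of_mem_descendants {b c : B} (h : b ∈ T.descendants c) :
    T.height c ≤ T.height b := by
  induction h with
  | refl => exact le_rfl
  | tail _ step ih => exact ih.trans (T.height_lt_of_parent step).le

lemma parent_notMem_descendants {c p : B} (hc : T.parent c = some p) : p ∉ T.descendants c :=
  fun h => (height_le_of_mem_descendants h).not_gt (T.height_lt_of_parent hc)

lemma mem_descendants_of_reachable {c p x : B} (hc : T.parent c = some p)
    (h : (T.graph.deleteEdges {s(p, c)}).Reachable c x) : x ∈ T.descendants c := by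
  rw [reachable_iff_reflTransGen] at h
  induction h with
  | refl => exact mem_descendants_self c
  | @tail b a _ hba hb =>
    obtain ⟨hadj, hne⟩ := (deleteEdges_adj ..).mp hba
    rcases graph_adj.mp hadj with h | h
    · exact hb.tail h
    · rcases Relation.ReflTransGen.cases_tail hb with rfl | ⟨m, hm, hstep⟩
      · rw [hc, Option.some.injEq] at h
        exact absurd (by simp [h, Sym2.eq_swap]) hne
      · rw [hstep, Option.some.injEq] at h
        exact h ▸ hm

lemma reachable_of_notMem_descendants {c p b : B} (hc : T.parent c = some p)
    (hb : b ∉ T.descendants c) : (T.graph.deleteEdges {s(p, c)}).Reachable b p := by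
  have key := reachable_root_deleteEdges (T := T) (S := {s(p, c)}) (· ∉ T.descendants c) (by
    intro a q ha hq
    refine ⟨fun h => ha (h.tail hq), fun hmem => ?_⟩
    rcases Sym2.eq_iff.mp hmem with ⟨rfl, rfl⟩ | ⟨rfl, -⟩
    · exact ha (Relation.ReflTransGen.single hq)
    · exact ha (mem_descendants_self _))
  exact (key b hb).trans (key p (parent_notMem_descendants hc)).symm

lemma graph_isAcyclic : T.graph.IsAcyclic := by
  rw [isAcyclic_iff_forall_adj_isBridge]
  suffices h : ∀ {c p}, T.parent c = some p → T.graph.IsBridge s(p, c) by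
    intro a b hab
    rcases graph_adj.mp hab with h' | h'
    · exact h h'
    · rw [Sym2.eq_swap]; exact h h'
  intro c p hc hreach
  exact parent_notMem_descendants hc (mem_descendants_of_reachable hc hreach.symm)

lemma graph_isTree : T.graph.IsTree := ⟨graph_connected, graph_isAcyclic⟩

lemma neighborSet_root : T.graph.neighborSet T.root = T.children T.root := by
  ext a
  simp [graph_adj, children, T.parent_eq_none_iff.mpr rfl]

lemma ncard_neighborSet_of_ne_root [Finite B] {b : B} (hb : b ≠ T.root) :
    (T.graph.neighborSet b).ncard = (T.children b).ncard + 1 := by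
  obtain ⟨p, hp⟩ := Option.ne_none_iff_exists'.mp (mt T.parent_eq_none_iff.mp hb)
  have hns : T.graph.neighborSet b = insert p (T.children b) := by
    ext a
    simp only [mem_neighborSet, graph_adj, children, Set.mem_insert_iff, Set.mem_ofPred_eq, hp,
      Option.some.injEq]
    tauto
  have hp' : p ∉ T.children b := fun h =>
    (T.height_lt_of_parent hp).not_gt (T.height_lt_of_parent h)
  rw [hns, Set.ncard_insert_of_notMem hp']

end ParentTree

/-- `none` is the root; in arm `j`, `some (j, inl i)` is the `i`-th spine node (spine node `0`
hangs from the root, spine node `i + 1` from spine node `i`) and `some (j, inr i)` is the `i`-th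
leaf, which hangs from spine node `min i k`. -/
abbrev CombNode (k : ℕ) : Type := Option (Fin 3 × (Fin (k + 1) ⊕ Fin (k + 2)))

def combParent (k : ℕ) : CombNode k → Option (CombNode k)
  | none => none
  | some (_, .inl ⟨0, _⟩) => some none
  | some (j, .inl ⟨i + 1, _⟩) => some (some (j, .inl ⟨i, by omega⟩))
  | some (j, .inr i) => some (some (j, .inl ⟨min i k, by omega⟩))

section combParent

variable {k : ℕ} (j : Fin 3)

@[simp] lemma combParent_none : combParent k none = none := rfl

@[simp] lemma combParent_spine_zero : combParent k (some (j, .inl 0)) = some none := rfl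

@[simp] lemma combParent_spine_succ {i : ℕ} (hi : i + 1 < k + 1) :
    combParent k (some (j, .inl ⟨i + 1, hi⟩)) = some (some (j, .inl ⟨i, by omega⟩)) := rfl

@[simp] lemma combParent_leaf (i : Fin (k + 2)) :
    combParent k (some (j, .inr i)) = some (some (j, .inl ⟨min i k, by omega⟩)) := rfl

end combParent

def combHeight (k : ℕ) : CombNode k → ℕ
  | none => 0
  | some (_, .inl i) => i + 1
  | some (_, .inr _) => k + 2

def combTree (k : ℕ) : ParentTree (CombNode k) where
  parent := combParent k
  height := combHeight k
  height_lt_of_parent {a b} h := by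
    rcases b with _ | ⟨j, ⟨_ | i, hi⟩ | i⟩ <;>
      simp only [combParent, reduceCtorEq, Option.some.injEq] at h <;> subst h <;>
      simp [combHeight]
  root := none
  parent_eq_none_iff {b} := by
    rcases b with _ | ⟨j, ⟨_ | i, hi⟩ | i⟩ <;> simp [combParent]

section Comb

variable {k : ℕ}

lemma combTree_children_root :
    (combTree k).children none = Set.range fun j => some (j, .inl 0) := by
  ext (_ | ⟨j, ⟨_ | i, hi⟩ | i⟩) <;> simp [ParentTree.children, combTree]

lemma combTree_ncard_children_spine (j : Fin 3) (i : Fin (k + 1)) :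
    ((combTree k).children (some (j, .inl i))).ncard = 2 := by
  rw [Set.ncard_eq_two]
  by_cases hi : (i : ℕ) < k
  · refine ⟨some (j, .inr ⟨i, by omega⟩), some (j, .inl ⟨i + 1, by omega⟩), by simp, ?_⟩
    ext (_ | ⟨j', ⟨_ | i', hi'⟩ | i'⟩) <;> simp [ParentTree.children, combTree] <;>
      simp only [Fin.ext_iff, implies_true]
    omega
  · refine ⟨some (j, .inr ⟨i, by omega⟩), some (j, .inr ⟨k + 1, by omega⟩), by simp; omega, ?_⟩
    ext (_ | ⟨j', ⟨_ | i', hi'⟩ | i'⟩) <;> simp [ParentTree.children, combTree] <;>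
      simp only [Fin.ext_iff] <;> omega

lemma combTree_children_leaf (j : Fin 3) (i : Fin (k + 2)) :
    (combTree k).children (some (j, .inr i)) = ∅ := by
  ext (_ | ⟨j', ⟨_ | i', hi⟩ | i'⟩) <;> simp [ParentTree.children, combTree]

lemma combTree_ncard_neighborSet_root : ((combTree k).graph.neighborSet none).ncard = 3 :=
  calc _ = ((combTree k).children none).ncard := congrArg _ ParentTree.neighborSet_root
    _ = 3 := by
      rw [combTree_children_root, Set.ncard_range_of_injective fun _ _ h => by simpa using h]
      simp

lemma combTree_ncard_neighborSet_spine (j : Fin 3) (i : Fin (k + 1)) :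
    ((combTree k).graph.neighborSet (some (j, .inl i))).ncard = 3 := by
  rw [ParentTree.ncard_neighborSet_of_ne_root (by simp [combTree]),
    combTree_ncard_children_spine]

lemma combTree_ncard_neighborSet_leaf (j : Fin 3) (i : Fin (k + 2)) :
    ((combTree k).graph.neighborSet (some (j, .inr i))).ncard = 1 := by
  rw [ParentTree.ncard_neighborSet_of_ne_root (by simp [combTree]), combTree_children_leaf,
    Set.ncard_empty]

lemma combTree_ncard_neighborSet_eq_one_iff {b : CombNode k} :
    ((combTree k).graph.neighborSet b).ncard = 1 ↔ ∃ j i, b = some (j, .inr i) := by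
  rcases b with _ | ⟨j, i | i⟩
  · simp [combTree_ncard_neighborSet_root]
  · simp [combTree_ncard_neighborSet_spine]
  · simp [combTree_ncard_neighborSet_leaf]

lemma combTree_ncard_neighborSet (b : CombNode k) :
    ((combTree k).graph.neighborSet b).ncard = 1 ∨
      ((combTree k).graph.neighborSet b).ncard = 3 := by
  rcases b with _ | ⟨j, i | i⟩
  · exact .inr combTree_ncard_neighborSet_root
  · exact .inr (combTree_ncard_neighborSet_spine j i)
  · exact .inl (combTree_ncard_neighborSet_leaf j i)

variable (k) in
abbrev CombLeaf : Type := {b : CombNode k // ((combTree k).graph.neighborSet b).ncard = 1}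

def combLeaf (j : Fin 3) (i : Fin (k + 2)) : CombLeaf k :=
  ⟨some (j, .inr i), combTree_ncard_neighborSet_leaf j i⟩

lemma combLeaf_bijective : Function.Bijective (Function.uncurry (combLeaf (k := k))) := by
  refine ⟨fun ⟨j, i⟩ ⟨j', i'⟩ h => by simpa [combLeaf] using h, ?_⟩
  rintro ⟨b, hb⟩
  obtain ⟨j, i, rfl⟩ := combTree_ncard_neighborSet_eq_one_iff.mp hb
  exact ⟨(j, i), rfl⟩

lemma card_combLeaf : Nat.card (CombLeaf k) = 3 * (k + 2) := by
  rw [← Nat.card_eq_of_bijective _ combLeaf_bijective]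
  simp

lemma combTree_descendants_subset (j : Fin 3) (y : Fin (k + 1) ⊕ Fin (k + 2)) :
    (combTree k).descendants (some (j, y)) ⊆ Set.range fun y' => some (j, y') := by
  intro b hb
  induction hb with
  | refl => exact ⟨y, rfl⟩
  | @tail b c _ hstep ih =>
    obtain ⟨y', rfl⟩ := ih
    rcases c with _ | ⟨j', ⟨_ | i', hi'⟩ | i'⟩ <;> simp [combTree] at hstep
    all_goals simp [hstep.1]

end Comb

section Width

variable {V : Type*} [Finite V] {k : ℕ}

lemma mmVal_le_ncard (G : SimpleGraph V) (A : Set V) : mmVal G A ≤ A.ncard := by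
  refine csSup_le' ?_
  rintro _ ⟨M, hM, hinj, rfl⟩
  rw [← Set.ncard_coe_finset]
  exact Set.ncard_le_ncard_of_injOn Prod.fst (fun p hp => (hM p hp).1)
    fun p hp q hq h => not_not.mp fun hne => (hinj p hp q hq hne).1 h

lemma mmVal_le_ncard_compl (G : SimpleGraph V) (A : Set V) : mmVal G A ≤ Aᶜ.ncard := by
  refine csSup_le' ?_
  rintro _ ⟨M, hM, hinj, rfl⟩
  rw [← Set.ncard_coe_finset]
  exact Set.ncard_le_ncard_of_injOn Prod.snd (fun p hp => (hM p hp).2.1)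
    fun p hp q hq h => not_not.mp fun hne => (hinj p hp q hq hne).2 h

lemma BranchDecomp.widthLE_of_ncard_side_le {G : SimpleGraph V} (D : BranchDecomp G)
    (h : ∀ u w, D.T.Adj u w → (D.side u w).ncard ≤ k ∨ (D.side u w)ᶜ.ncard ≤ k) :
    D.widthLE k := fun u w huw =>
  (h u w huw).elim (le_trans (mmVal_le_ncard G _)) (le_trans (mmVal_le_ncard_compl G _))

lemma mmw_le_of_card_le (G : SimpleGraph V) (h : Nat.card V ≤ 2 * k + 1) : mmw G ≤ k := by
  rcases isEmpty_or_nonempty (BranchDecomp G) with hD | hD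
  · -- `G` has fewer than two vertices, and `mmw G = sInf ∅ = 0`
    simp [mmw]
  · obtain ⟨D⟩ := hD
    refine Nat.sInf_le ⟨D, D.widthLE_of_ncard_side_le fun u w _ => ?_⟩
    have := Set.ncard_add_ncard_compl (D.side u w)
    omega

end Width

section CombDecomp

variable {V : Type*} {k : ℕ}

def combDecomp (G : SimpleGraph V) (L : CombLeaf k ≃ V) : BranchDecomp G :=
  ⟨CombNode k, inferInstance, (combTree k).graph, ParentTree.graph_isTree,
    combTree_ncard_neighborSet, L⟩

lemma ncard_setOf_leaf_mem_descendants_le (L : CombLeaf k ≃ V) (j : Fin 3)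
    (y : Fin (k + 1) ⊕ Fin (k + 2)) :
    {x : V | (L.symm x).1 ∈ (combTree k).descendants (some (j, y))}.ncard ≤ k + 2 := by
  have hsub : {x : V | (L.symm x).1 ∈ (combTree k).descendants (some (j, y))} ⊆
      Set.range fun i => L (combLeaf j i) := by
    intro x hx
    obtain ⟨y', hy'⟩ := combTree_descendants_subset j y hx
    obtain ⟨j', i, hi⟩ := combTree_ncard_neighborSet_eq_one_iff.mp (L.symm x).2
    obtain ⟨rfl, rfl⟩ : j' = j ∧ Sum.inr i = y' := by simpa [hi] using hy'.symm
    exact ⟨i, by rw [← L.apply_symm_apply x]; exact congrArg L (Subtype.ext hi.symm)⟩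
  refine (Set.ncard_le_ncard hsub).trans_eq ?_
  rw [Set.ncard_range_of_injective, Nat.card_eq_fintype_card, Fintype.card_fin]
  exact fun i i' h => by simpa [combLeaf] using L.injective h

lemma combDecomp_widthLE [Finite V] (G : SimpleGraph V) (L : CombLeaf k ≃ V) :
    (combDecomp G L).widthLE (k + 2) := by
  refine (combDecomp G L).widthLE_of_ncard_side_le fun (u w : CombNode k) huw => ?_
  rcases ParentTree.graph_adj.mp huw with h | h
  · obtain ⟨⟨j, y⟩, rfl⟩ := Option.ne_none_iff_exists'.mp (ParentTree.ne_root_of_parent_eq_some h)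
    refine .inr ((Set.ncard_le_ncard fun x hx => ?_).trans
      (ncard_setOf_leaf_mem_descendants_le L j y))
    by_contra hx'
    exact hx (ParentTree.reachable_of_notMem_descendants h hx')
  · obtain ⟨⟨j, y⟩, rfl⟩ := Option.ne_none_iff_exists'.mp (ParentTree.ne_root_of_parent_eq_some h)
    refine .inl ((Set.ncard_le_ncard fun x hx => ?_).trans
      (ncard_setOf_leaf_mem_descendants_le L j y))
    exact ParentTree.mem_descendants_of_reachable h (by rw [Sym2.eq_swap]; exact hx.symm)

lemma mmw_le_of_card_eq_three_mul [Finite V] (G : SimpleGraph V) (h : Nat.card V = 3 * (k + 2)) :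
    mmw G ≤ k + 2 := by
  obtain ⟨L⟩ := Finite.card_eq.mp (card_combLeaf.trans h.symm)
  exact Nat.sInf_le ⟨combDecomp G L, combDecomp_widthLE G L⟩

end CombDecomp

/-- `mmw(K_{3n}) ≤ n`; in particular any graph on at most 6 vertices has
mm-width at most 2. -/
theorem mmw_complete_le :
    (∀ n : ℕ, 0 < n → mmw (completeGraph (Fin (3 * n))) ≤ n) ∧
    (∀ (W : Type) [Finite W] (G : SimpleGraph W), Nat.card W ≤ 6 → mmw G ≤ 2) := by
  refine ⟨fun n _ => ?_, fun W _ G hW => ?_⟩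
  · rcases Nat.lt_or_ge n 2 with hn | hn
    · exact mmw_le_of_card_le _ (by simp; omega)
    · obtain ⟨k, rfl⟩ := Nat.exists_eq_add_of_le' hn
      exact mmw_le_of_card_eq_three_mul _ (by simp)
  · rcases hW.lt_or_eq with hW | hW
    · exact mmw_le_of_card_le G (by omega)
    · exact mmw_le_of_card_eq_three_mul (k := 0) G hW
end

section
/- Let G_k be the k×k grid with k ≥ 2. If X ⊆ V(G_k) satisfies mm(X) < k, then X contains a full row if and only if X contains a full column. -/
open SimpleGraph

/-!
If a row `R_j` lies in `X` but no column does, every column `C_i` is a path that meets `X` (at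
`(i, j)`) and leaves it, so it contains a grid edge from `X` to its complement. These `k` edges lie
in different columns, hence form a matching, and `mm(X) ≥ k`. Exchanging rows and columns gives
the converse.
-/

section Matching

variable {V W ι : Type*} {G : SimpleGraph V} {H : SimpleGraph W}

theorem le_mmVal [Finite V] {A : Set V} (M : Finset (V × V))
    (hcross : ∀ p ∈ M, p.1 ∈ A ∧ p.2 ∉ A ∧ G.Adj p.1 p.2)
    (hdisj : ∀ p ∈ M, ∀ q ∈ M, p ≠ q → p.1 ≠ q.1 ∧ p.2 ≠ q.2) :
    M.card ≤ mmVal G A := by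
  have := Fintype.ofFinite V
  refine le_csSup ⟨Fintype.card (V × V), ?_⟩ ⟨M, hcross, hdisj, rfl⟩
  rintro _ ⟨M', -, -, rfl⟩
  exact M'.card_le_univ

theorem SimpleGraph.Preconnected.exists_dart_mem_not_mem (hH : H.Preconnected) {S : Set W}
    (hin : S.Nonempty) (hout : Sᶜ.Nonempty) : ∃ d : H.Dart, d.fst ∈ S ∧ d.snd ∉ S := by
  obtain ⟨u, hu⟩ := hin
  obtain ⟨v, hv⟩ := hout
  obtain ⟨d, -, hd⟩ := (hH u v).some.exists_boundary_dart S hu hv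
  exact ⟨d, hd⟩

theorem card_le_mmVal_of_crossing [Finite V] [Fintype ι] (hH : H.Preconnected) (A : Set V)
    (f : ι → H →g G)
    (hdisj : Pairwise fun i i' => Disjoint (Set.range (f i)) (Set.range (f i')))
    (hin : ∀ i, (Set.range (f i) ∩ A).Nonempty) (hout : ∀ i, ¬ Set.range (f i) ⊆ A) :
    Fintype.card ι ≤ mmVal G A := by
  classical
  have hcross : ∀ i, ∃ d : H.Dart, f i d.fst ∈ A ∧ f i d.snd ∉ A := by
    intro i
    refine hH.exists_dart_mem_not_mem (S := f i ⁻¹' A) ?_ ?_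
    · obtain ⟨_, ⟨w, rfl⟩, hw⟩ := hin i
      exact ⟨w, hw⟩
    · obtain ⟨_, ⟨w, rfl⟩, hw⟩ := Set.not_subset.1 (hout i)
      exact ⟨w, hw⟩
  choose d hdA hdA' using hcross
  set e : ι → V × V := fun i => (f i (d i).fst, f i (d i).snd)
  have hne : ∀ i i' (w w' : W), i ≠ i' → f i w ≠ f i' w' := fun i i' w w' h heq =>
    Set.disjoint_left.1 (hdisj h) ⟨w, rfl⟩ ⟨w', heq.symm⟩
  have he : e.Injective := fun i i' h =>
    by_contra fun hii' => hne i i' _ _ hii' (congrArg Prod.fst h)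
  calc Fintype.card ι = (Finset.univ.image e).card := by
        rw [Finset.card_image_of_injective _ he, Finset.card_univ]
    _ ≤ mmVal G A := by
        refine le_mmVal _ ?_ ?_
        · simp only [Finset.mem_image, Finset.mem_univ, true_and, forall_exists_index,
            forall_apply_eq_imp_iff]
          exact fun i => ⟨hdA i, hdA' i, (f i).map_adj (d i).adj⟩
        · simp only [Finset.mem_image, Finset.mem_univ, true_and, forall_exists_index,
            forall_apply_eq_imp_iff]
          intro i i' hii'
          have : i ≠ i' := fun h => hii' (h ▸ rfl)
          exact ⟨hne i i' _ _ this, hne i i' _ _ this⟩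

end Matching

def gridColHom (k : ℕ) (i : Fin k) : pathGraph k →g gridGraph k where
  toFun t := (i, t)
  map_rel' {s t} h := by
    rw [pathGraph_adj] at h
    simp only [gridGraph, fromRel_adj, ne_eq, Prod.mk.injEq, Fin.ext_iff, true_and]
    omega

def gridRowHom (k : ℕ) (j : Fin k) : pathGraph k →g gridGraph k where
  toFun t := (t, j)
  map_rel' {s t} h := by
    rw [pathGraph_adj] at h
    simp only [gridGraph, fromRel_adj, ne_eq, Prod.mk.injEq, Fin.ext_iff, true_and, and_true]
    omega

theorem range_gridColHom (k : ℕ) (i : Fin k) : Set.range (gridColHom k i) = gridCol k i := by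
  ext ⟨a, b⟩
  simp [gridColHom, gridCol, eq_comm]

theorem range_gridRowHom (k : ℕ) (j : Fin k) : Set.range (gridRowHom k j) = gridRow k j := by
  ext ⟨a, b⟩
  simp [gridRowHom, gridRow, eq_comm]

theorem pairwise_disjoint_range_gridColHom (k : ℕ) :
    Pairwise fun i i' => Disjoint (Set.range (gridColHom k i)) (Set.range (gridColHom k i')) := by
  intro i i' h
  simp only [range_gridColHom, gridCol, Set.disjoint_left, Set.mem_ofPred_eq]
  exact fun _ hp hp' => h (hp.symm.trans hp')

theorem pairwise_disjoint_range_gridRowHom (k : ℕ) :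
    Pairwise fun j j' => Disjoint (Set.range (gridRowHom k j)) (Set.range (gridRowHom k j')) := by
  intro j j' h
  simp only [range_gridRowHom, gridRow, Set.disjoint_left, Set.mem_ofPred_eq]
  exact fun _ hp hp' => h (hp.symm.trans hp')

theorem grid_row_iff_col_general (k : ℕ) (X : Set (Fin k × Fin k))
    (hX : mmVal (gridGraph k) X < k) :
    (∃ j : Fin k, gridRow k j ⊆ X) ↔ (∃ i : Fin k, gridCol k i ⊆ X) := by
  constructor
  · rintro ⟨j, hj⟩
    by_contra! hcol
    refine hX.not_ge ?_
    simpa using card_le_mmVal_of_crossing (pathGraph_preconnected k) X (gridColHom k)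
      (pairwise_disjoint_range_gridColHom k) (fun i => ⟨(i, j), ⟨j, rfl⟩, hj rfl⟩)
      (fun i => by rw [range_gridColHom]; exact hcol i)
  · rintro ⟨i, hi⟩
    by_contra! hrow
    refine hX.not_ge ?_
    simpa using card_le_mmVal_of_crossing (pathGraph_preconnected k) X (gridRowHom k)
      (pairwise_disjoint_range_gridRowHom k) (fun j => ⟨(i, j), ⟨i, rfl⟩, hi rfl⟩)
      (fun j => by rw [range_gridRowHom]; exact hrow j)

/-- if `mm(X) < k` then `X` contains a full row iff it contains a full column. -/
theorem grid_row_iff_col (k : ℕ) (hk : 2 ≤ k) (X : Set (Fin k × Fin k))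
    (hX : mmVal (gridGraph k) X < k) :
    (∃ j : Fin k, gridRow k j ⊆ X) ↔ (∃ i : Fin k, gridCol k i ⊆ X) :=
  grid_row_iff_col_general k X hX
end
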